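/- Let $n > 1$, $\mathfrak{m} = (X_1,\dots,X_n) \subset \Bbbk[X_1,\dots,X_n]$, and $\mathcal{L}_+ = \mathfrak{m}\,\mathrm{Der}(\Bbbk[X_1,\dots,X_n])$. Then for every $s \geq 1$, the span of all brackets $[\,\mathfrak{m}^s \mathcal{L}_+, \mathfrak{m}^s \mathcal{L}_+\,]$ equals $\mathfrak{m}^{2s}\mathcal{L}_+$. -/

import Mathlib

/-!
`⊆`: a field in `𝔪^s ℒ₊` maps `𝔪^m` into `𝔪^(m+s)`, so `[D, E] Xᵢ = D (E Xᵢ) - E (D Xᵢ)` lies in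
`𝔪^(2s+1)`.

`⊇`: it suffices to obtain every `X^c ∂ᵢ` with `|c| ≥ 2s + 1`. As
`[X^a ∂ᵢ, X^b ∂ᵢ] = (bᵢ - aᵢ) X^(a+b-eᵢ) ∂ᵢ`, this works whenever `c + eᵢ = a + b` with
`|a|, |b| ≥ s + 1` and `aᵢ ≠ bᵢ`, and such a splitting exists unless `c = (2s+1) eᵢ`. In that case
`Xᵢ^(2s+1) ∂ᵢ = [Xᵢ^(s+1) ∂ⱼ, Xᵢ^s Xⱼ ∂ᵢ] + (s+1) Xᵢ^(2s) Xⱼ ∂ⱼ` for any `j ≠ i`, and the last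
field is of the first kind because `Xᵢ^(2s) Xⱼ` is not a power of `Xⱼ`.
-/

open MvPolynomial

variable (k : Type*) [Field k] [CharZero k] (n : ℕ)

/-- The maximal ideal `𝔪 = (X₁, …, Xₙ)` at the origin. -/
noncomputable def mIdeal : Ideal (MvPolynomial (Fin n) k) :=
  Ideal.span (Set.range (X : Fin n → MvPolynomial (Fin n) k))

/-- `𝔪^s ℒ₊`: the vector fields (derivations) whose coefficients lie in `𝔪^(s+1)`,
i.e. which vanish to order at least `s + 1` at the origin. -/
noncomputable def mL (s : ℕ) :
    Submodule k (Derivation k (MvPolynomial (Fin n) k) (MvPolynomial (Fin n) k)) where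
  carrier := {D | ∀ i, D (X i) ∈ (mIdeal k n) ^ (s + 1)}
  add_mem' := by
    intro a b ha hb i
    simpa using add_mem (ha i) (hb i)
  zero_mem' := by intro i; simp
  smul_mem' := by
    intro c D hD i
    simpa using Submodule.smul_of_tower_mem _ c (hD i)

theorem Derivation.apply_mem_pow_add {R A : Type*} [CommSemiring R] [CommSemiring A] [Algebra R A]
    {I : Ideal A} {s : ℕ} {D : Derivation R A A} (hD : ∀ a, D a ∈ I ^ (s + 1)) {m : ℕ} {p : A}
    (hp : p ∈ I ^ m) : D p ∈ I ^ (m + s) := by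
  induction m generalizing p with
  | zero => exact Ideal.pow_le_pow_right (by omega) (hD p)
  | succ m ih =>
    rw [pow_succ] at hp
    refine Submodule.mul_induction_on hp (fun x hx y hy => ?_) fun x y hx hy => ?_
    · rw [Derivation.leibniz, smul_eq_mul, smul_eq_mul]
      refine add_mem ?_ ?_
      · simpa only [← pow_add, show m + (s + 1) = m + 1 + s by omega] using
          Ideal.mul_mem_mul hx (hD y)
      · simpa only [← pow_succ', show m + s + 1 = m + 1 + s by omega] using
          Ideal.mul_mem_mul hy (ih hx)
    · rw [map_add]
      exact add_mem hx hy

theorem MvPolynomial.derivation_apply_mem {R σ : Type*} [CommSemiring R]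
    {J : Ideal (MvPolynomial σ R)} {D : Derivation R (MvPolynomial σ R) (MvPolynomial σ R)}
    (hD : ∀ i, D (X i) ∈ J) (f : MvPolynomial σ R) : D f ∈ J := by
  induction f using MvPolynomial.induction_on with
  | C a => rw [derivation_C]; exact zero_mem J
  | add p q hp hq => rw [map_add]; exact add_mem hp hq
  | mul_X p i hp =>
    rw [Derivation.leibniz]
    exact add_mem (J.smul_mem p (hD i)) (J.smul_mem _ hp)

open Finsupp in
-- `a` takes `min(|c| - cᵢ, s + 1)` units from the part of `c` off `i` and is topped up by `Xᵢ`.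
theorem Finsupp.exists_add_eq_add_single_of_ne_single {σ : Type*} {s : ℕ} {c : σ →₀ ℕ} {i : σ}
    (hc : 2 * s + 1 ≤ degree c) (hne : c ≠ single i (2 * s + 1)) :
    ∃ a b : σ →₀ ℕ, a + b = c + single i 1 ∧ s + 1 ≤ degree a ∧ s + 1 ≤ degree b ∧ a i ≠ b i := by
  set e := c.erase i
  have hce : single i (c i) + e = c := single_add_erase i c
  have hdeg : degree c = c i + degree e := by rw [← hce, map_add, degree_single]; simp [e]
  have hpure : degree e = 0 → c i ≠ 2 * s + 1 := fun he hci =>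
    hne (by rw [← hce, (degree_eq_zero_iff e).1 he, add_zero, hci])
  obtain ⟨v, hve, hv⟩ := exists_le_degree_eq e (min (degree e) (s + 1)) (min_le_left _ _)
  have hvi : v i = 0 := Nat.eq_zero_of_le_zero (by simpa [e] using hve i)
  set a := v + single i (s + 1 - degree v)
  have ha : a ≤ c + single i 1 := fun t => by
    rcases eq_or_ne t i with rfl | ht
    · simp only [a, coe_add, Pi.add_apply, hvi, single_eq_same]
      omega
    · simpa [a, e, single_eq_of_ne ht, erase_ne ht] using hve t
  obtain ⟨b, hab⟩ := le_iff_exists_add.1 ha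
  have hdega : degree a = s + 1 := by
    simp only [a, map_add, degree_single]
    omega
  have hdegb : degree a + degree b = degree c + 1 := by
    rw [← map_add, ← hab, map_add, degree_single]
  have hbi : a i + b i = c i + 1 := by
    simpa using (DFunLike.congr_fun hab i).symm
  have hai : a i = s + 1 - degree v := by simp [a, hvi]
  exact ⟨a, b, hab.symm, hdega.ge, by omega, by omega⟩

section MonomialField

variable (R : Type*) {σ : Type*} [CommRing R] [DecidableEq σ]

/-- The vector field `X^a ∂ᵢ`. -/
noncomputable def monomialField (a : σ →₀ ℕ) (i : σ) :
    Derivation R (MvPolynomial σ R) (MvPolynomial σ R) :=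
  mkDerivation R (Pi.single i (monomial a 1))

variable {R}

theorem monomialField_X (a : σ →₀ ℕ) (i l : σ) :
    monomialField R a i (X l) = Pi.single (M := fun _ => MvPolynomial σ R) i (monomial a 1) l :=
  mkDerivation_X R _ l

theorem monomialField_monomial (a b : σ →₀ ℕ) (i : σ) :
    monomialField R a i (monomial b 1) = (b i : R) • monomial (a + b - Finsupp.single i 1) 1 := by
  rw [monomialField, mkDerivation_monomial, one_smul,
    Finsupp.sum_eq_single i (fun l _ hl => by rw [Pi.single_eq_of_ne hl, smul_zero]) (by simp),
    Pi.single_eq_same, smul_eq_mul, monomial_mul, mul_one, smul_monomial, smul_eq_mul, mul_one]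
  rcases Nat.eq_zero_or_pos (b i) with hb | hb
  · simp [hb]
  · rw [add_comm a, tsub_add_eq_add_tsub (Finsupp.single_le_iff.2 hb)]

theorem lie_monomialField (a b : σ →₀ ℕ) (i j : σ) :
    ⁅monomialField R a i, monomialField R b j⁆ =
      (b i : R) • monomialField R (a + b - Finsupp.single i 1) j -
        (a j : R) • monomialField R (a + b - Finsupp.single j 1) i := by
  refine derivation_ext fun l => ?_
  simp only [Derivation.commutator_apply, Derivation.sub_apply, Derivation.smul_apply,
    monomialField_X]
  rw [Pi.apply_single (fun _ => monomialField R a i) (fun _ => map_zero _),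
    Pi.apply_single (fun _ => monomialField R b j) (fun _ => map_zero _),
    monomialField_monomial, monomialField_monomial, add_comm b, Pi.single_smul, Pi.single_smul]
  rfl

theorem eq_sum_monomialField [Fintype σ]
    (D : Derivation R (MvPolynomial σ R) (MvPolynomial σ R)) :
    D = ∑ i, ∑ c ∈ (D (X i)).support, coeff c (D (X i)) • monomialField R c i := by
  calc D = mkDerivationEquiv R (fun l => D (X l)) :=
        ((mkDerivationEquiv R).apply_symm_apply D).symm
    _ = mkDerivationEquiv R (∑ i, ∑ c ∈ (D (X i)).support,
          coeff c (D (X i)) • Pi.single (M := fun _ => MvPolynomial σ R) i (monomial c 1)) := by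
      congr 1
      funext l
      simp [Finset.sum_apply, Pi.single_apply, smul_monomial]
    _ = _ := by simp only [map_sum, map_smul]; rfl

end MonomialField

section

variable {k : Type*} [Field k] {n : ℕ}

theorem mIdeal_eq_idealOfVars : mIdeal k n = idealOfVars (Fin n) k := rfl

theorem lie_mem_mL {s : ℕ} {D E : Derivation k (MvPolynomial (Fin n) k) (MvPolynomial (Fin n) k)}
    (hD : D ∈ mL k n s) (hE : E ∈ mL k n s) : ⁅D, E⁆ ∈ mL k n (2 * s) := by
  have hmap {F : Derivation k (MvPolynomial (Fin n) k) (MvPolynomial (Fin n) k)}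
      (hF : F ∈ mL k n s) {m : ℕ} {p : MvPolynomial (Fin n) k} (hp : p ∈ mIdeal k n ^ m) :
      F p ∈ mIdeal k n ^ (m + s) :=
    Derivation.apply_mem_pow_add (derivation_apply_mem hF) hp
  intro i
  rw [Derivation.commutator_apply, show 2 * s + 1 = s + 1 + s by ring]
  exact sub_mem (hmap hD (hE i)) (hmap hE (hD i))

theorem monomialField_mem_mL {s : ℕ} {a : Fin n →₀ ℕ} (ha : s + 1 ≤ a.degree) (i : Fin n) :
    monomialField k a i ∈ mL k n s := by
  intro l
  rw [monomialField_X]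
  rcases eq_or_ne l i with rfl | h
  · rw [Pi.single_eq_same, mIdeal_eq_idealOfVars, monomial_mem_pow_idealOfVars_iff _ _ one_ne_zero]
    exact ha
  · rw [Pi.single_eq_of_ne h]
    exact zero_mem _

variable (k n) in
noncomputable def bracketSpan (s : ℕ) :
    Submodule k (Derivation k (MvPolynomial (Fin n) k) (MvPolynomial (Fin n) k)) :=
  Submodule.span k {z | ∃ D ∈ mL k n s, ∃ E ∈ mL k n s, z = ⁅D, E⁆}

theorem lie_mem_bracketSpan {s : ℕ}
    {D E : Derivation k (MvPolynomial (Fin n) k) (MvPolynomial (Fin n) k)}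
    (hD : D ∈ mL k n s) (hE : E ∈ mL k n s) : ⁅D, E⁆ ∈ bracketSpan k n s :=
  Submodule.subset_span ⟨D, hD, E, hE, rfl⟩

theorem bracketSpan_le_mL (s : ℕ) : bracketSpan k n s ≤ mL k n (2 * s) := by
  rw [bracketSpan, Submodule.span_le]
  rintro _ ⟨D, hD, E, hE, rfl⟩
  exact lie_mem_mL hD hE

theorem monomialField_mem_bracketSpan_of_add_eq [CharZero k] {s : ℕ} {a b c : Fin n →₀ ℕ}
    {i : Fin n} (hab : a + b = c + Finsupp.single i 1) (ha : s + 1 ≤ a.degree)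
    (hb : s + 1 ≤ b.degree) (hne : a i ≠ b i) : monomialField k c i ∈ bracketSpan k n s := by
  have hlie : ⁅monomialField k a i, monomialField k b i⁆ =
      ((b i : k) - a i) • monomialField k c i := by
    rw [lie_monomialField, hab, add_tsub_cancel_right]
    exact (sub_smul _ _ _).symm
  have hcoef : (b i : k) - a i ≠ 0 := sub_ne_zero.2 (Nat.cast_injective.ne hne.symm)
  rw [← inv_smul_smul₀ hcoef (monomialField k c i), ← hlie]
  exact Submodule.smul_mem _ _
    (lie_mem_bracketSpan (monomialField_mem_mL ha i) (monomialField_mem_mL hb i))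

theorem monomialField_single_mem_bracketSpan [CharZero k] {s : ℕ} (hs : 1 ≤ s) {i j : Fin n}
    (hij : i ≠ j) : monomialField k (Finsupp.single i (2 * s + 1)) i ∈ bracketSpan k n s := by
  set c := Finsupp.single i (2 * s) + Finsupp.single j 1
  -- `[Xᵢ^(s+1) ∂ⱼ, Xᵢ^s Xⱼ ∂ᵢ] = Xᵢ^(2s+1) ∂ᵢ - (s+1) Xᵢ^(2s) Xⱼ ∂ⱼ`
  have hlie := lie_monomialField (R := k) (Finsupp.single i (s + 1))
    (Finsupp.single i s + Finsupp.single j 1) j i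
  have e1 : Finsupp.single i (s + 1) + (Finsupp.single i s + Finsupp.single j 1)
      - Finsupp.single j 1 = Finsupp.single i (2 * s + 1) := by
    ext t
    simp only [Finsupp.single_apply, Finsupp.coe_add, Finsupp.coe_tsub, Pi.add_apply,
      Pi.sub_apply]
    split_ifs <;> omega
  have e2 : Finsupp.single i (s + 1) + (Finsupp.single i s + Finsupp.single j 1)
      - Finsupp.single i 1 = c := by
    ext t
    simp only [c, Finsupp.single_apply, Finsupp.coe_add, Finsupp.coe_tsub, Pi.add_apply,
      Pi.sub_apply]
    split_ifs <;> omega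
  simp only [e1, e2, Finsupp.add_apply, Finsupp.single_eq_same, Finsupp.single_eq_of_ne' hij,
    zero_add, Nat.cast_one, one_smul] at hlie
  have hc : monomialField k c j ∈ bracketSpan k n s := by
    have hne : c ≠ Finsupp.single j (2 * s + 1) := fun h => by
      have := DFunLike.congr_fun h i
      simp only [c, Finsupp.add_apply, Finsupp.single_eq_same, Finsupp.single_eq_of_ne hij] at this
      omega
    obtain ⟨a, b, hab, ha, hb, hne⟩ :=
      Finsupp.exists_add_eq_add_single_of_ne_single (c := c) (i := j)
        (by simp only [c, map_add, Finsupp.degree_single]; omega) hne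
    exact monomialField_mem_bracketSpan_of_add_eq hab ha hb hne
  rw [← sub_add_cancel (monomialField k _ i) (((s + 1 : ℕ) : k) • monomialField k c j), ← hlie]
  exact add_mem (lie_mem_bracketSpan (monomialField_mem_mL (by simp) j)
    (monomialField_mem_mL (by simp [map_add]) i)) (Submodule.smul_mem _ _ hc)

theorem monomialField_mem_bracketSpan [CharZero k] (hn : 1 < n) {s : ℕ} (hs : 1 ≤ s)
    {c : Fin n →₀ ℕ} (hc : 2 * s + 1 ≤ c.degree) (i : Fin n) :
    monomialField k c i ∈ bracketSpan k n s := by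
  have : Nontrivial (Fin n) := Fin.nontrivial_iff_two_le.2 hn
  obtain ⟨j, hji⟩ := exists_ne i
  by_cases hpure : c = Finsupp.single i (2 * s + 1)
  · exact hpure ▸ monomialField_single_mem_bracketSpan hs hji.symm
  · obtain ⟨a, b, hab, ha, hb, hne⟩ := Finsupp.exists_add_eq_add_single_of_ne_single hc hpure
    exact monomialField_mem_bracketSpan_of_add_eq hab ha hb hne

theorem mL_le_bracketSpan [CharZero k] (hn : 1 < n) {s : ℕ} (hs : 1 ≤ s) :
    mL k n (2 * s) ≤ bracketSpan k n s := by
  intro D hD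
  rw [eq_sum_monomialField D]
  refine Submodule.sum_mem _ fun i _ => Submodule.sum_mem _ fun c hc => Submodule.smul_mem _ _ ?_
  have hDi := hD i
  rw [mIdeal_eq_idealOfVars, mem_pow_idealOfVars_iff] at hDi
  exact monomialField_mem_bracketSpan hn hs (hDi c hc) i

end

/-- For `n > 1` and `s ≥ 1`, the span of all brackets `[𝔪^s ℒ₊, 𝔪^s ℒ₊]`
equals `𝔪^(2s) ℒ₊`. -/
theorem stmt8 (hn : 1 < n) (s : ℕ) (hs : 1 ≤ s) :
    Submodule.span k
        {z : Derivation k (MvPolynomial (Fin n) k) (MvPolynomial (Fin n) k) |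
          ∃ D ∈ mL k n s, ∃ E ∈ mL k n s, z = ⁅D, E⁆}
      = mL k n (2 * s) :=
  le_antisymm (bracketSpan_le_mL s) (mL_le_bracketSpan hn hs)
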